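/- Let n ≥ 1, let X ⊂ ℝⁿ be a finite point cloud, V a box in ℝⁿ, π > 0, 0 < α ≤ 1, γ = (1/α) − 1, N = X ∩ B(V, π), and let M be a largest optimal solution in sol_α(V, N) with M ≠ V. Let p be the number of facets of M that are disjoint from V and q the number of facets of M contained in the open box B(V, π), and assume p ≥ 1 and q ≥ 1. Let θ(N∖M) = #(N ∖ M) and θ(∂M) = #(N ∩ ∂M), where ∂M is the topological boundary of M. Then (θ(N∖M) + θ(∂M))/p ≥ γ ≥ θ(N∖M)/q. -/

import Mathlib

open scoped Classical

noncomputable section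

namespace BoxFiltration

variable {n : ℕ}

/-- `(l, u)` determines a box `∏ i, [l i, u i]` when `l i ≤ u i` for all `i`. -/
def IsBox (l u : Fin n → ℝ) : Prop := ∀ i, l i ≤ u i

/-- The set of points of the box `∏ i, [l i, u i]`. -/
def boxSet (l u : Fin n → ℝ) : Set (Fin n → ℝ) := {x | ∀ i, l i ≤ x i ∧ x i ≤ u i}

/-- Total width `|V| = ∑ i, (u i - l i)`. -/
def width (l u : Fin n → ℝ) : ℝ := ∑ i, (u i - l i)

/-- Box containment: the box `(l, u)` is contained in the box `(L, U)`. -/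
def BoxLE (l u L U : Fin n → ℝ) : Prop := ∀ i, L i ≤ l i ∧ u i ≤ U i

/-- Open π-neighborhood `B(V, π) = ∏ i, (l i - π, u i + π)`. -/
def nbhd (l u : Fin n → ℝ) (π : ℝ) : Set (Fin n → ℝ) :=
  {x | ∀ i, l i - π < x i ∧ x i < u i + π}

/-- Weight of a point `x` w.r.t. the box `(l, u)`:
`w_V(x) = min {0, min_i (x i - l i), min_i (u i - x i)}`. -/
def weight (l u x : Fin n → ℝ) : ℝ :=
  min 0 (sInf (Set.range fun i => min (x i - l i) (u i - x i)))

/-- Point-cover cost `C_α(V, N) = -α ∑_{x ∈ N} w_V(x) + (1 - α)|V|`. -/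
def cost (α : ℝ) (l u : Fin n → ℝ) (N : Finset (Fin n → ℝ)) : ℝ :=
  -α * ∑ x ∈ N, weight l u x + (1 - α) * width l u

/-- Neighborhood point set `N = X ∩ B(V, π)`. -/
def nbhdPts (X : Finset (Fin n → ℝ)) (l u : Fin n → ℝ) (π : ℝ) : Finset (Fin n → ℝ) :=
  X.filter (fun x => x ∈ nbhd l u π)

/-- `(l', u') ∈ sol_α(V, N)`: `(l', u')` is a box containing `V = (l, u)` of minimal cost. -/
def OptSol (α : ℝ) (l u : Fin n → ℝ) (N : Finset (Fin n → ℝ)) (l' u' : Fin n → ℝ) : Prop :=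
  IsBox l' u' ∧ BoxLE l u l' u' ∧
    ∀ l'' u'', IsBox l'' u'' → BoxLE l u l'' u'' → cost α l' u' N ≤ cost α l'' u'' N

/-- A largest optimal solution contains every optimal solution. -/
def LargestOptSol (α : ℝ) (l u : Fin n → ℝ) (N : Finset (Fin n → ℝ)) (l' u' : Fin n → ℝ) :
    Prop :=
  OptSol α l u N l' u' ∧ ∀ l'' u'', OptSol α l u N l'' u'' → BoxLE l'' u'' l' u'

end BoxFiltration


namespace BoxFiltration

variable {n : ℕ}

/-- The facet of the box `(l, u)` in direction `i`: the upper facet if `b = true`,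
the lower facet if `b = false`. -/
def facet (l u : Fin n → ℝ) (i : Fin n) (b : Bool) : Set (Fin n → ℝ) :=
  {x | x ∈ boxSet l u ∧ x i = if b then u i else l i}

end BoxFiltration

open BoxFiltration

/-!
Compare the optimal box `M` with boxes obtained by moving its facets by a small `ε > 0`.
Pushing all `2n` facets outward widens `M` by `2nε` and raises the weight of each of the
`θ(N∖M)` points outside `M` by exactly `ε`, so optimality gives `α θ(N∖M) ≤ (1 - α) 2n`.
Pulling in the `p` facets disjoint from `V` keeps `V` inside, narrows `M` by `pε` and lowers
only the weights of the points off the interior of `M`, each by at most `ε`; this gives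
`(1 - α) p ≤ α (θ(N∖M) + θ(∂M))`. Finally `q = 2n`: for `α < 1` an optimal box lies in every box
containing `V` and `N` (cutting it down narrows it without lowering any weight), hence strictly
inside `B(V, π)`; and `α = 1` admits no largest solution, since every enlargement of an optimal
box is then optimal too.
-/

namespace BoxFiltration

open Finset Filter Topology

variable {n : ℕ} {l u l' u' Ml Mu x : Fin n → ℝ} {α : ℝ} {N : Finset (Fin n → ℝ)}

section Weight

-- For `n = 0` the infimum in `weight` is the junk value `sInf ∅ = 0`.
variable [Nonempty (Fin n)]

theorem le_weight_iff {t : ℝ} :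
    t ≤ weight l u x ↔ t ≤ 0 ∧ ∀ i, t ≤ x i - l i ∧ t ≤ u i - x i := by
  rw [weight, le_min_iff, ← iInf, le_ciInf_iff (Set.finite_range _).bddBelow]
  simp only [le_min_iff]

theorem weight_nonpos : weight l u x ≤ 0 := (le_weight_iff.1 le_rfl).1

theorem weight_eq_zero_iff : weight l u x = 0 ↔ x ∈ boxSet l u := by
  rw [le_antisymm_iff, and_iff_right weight_nonpos, le_weight_iff]
  simp only [le_refl, true_and, sub_nonneg, boxSet, Set.mem_ofPred_eq]

theorem weight_add_le_weight {δ : ℝ} (hδ : δ ≤ -weight l u x)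
    (hl : ∀ i, l' i + δ ≤ l i) (hu : ∀ i, u i + δ ≤ u' i) :
    weight l u x + δ ≤ weight l' u' x := by
  have hw := (le_weight_iff.1 (le_refl (weight l u x))).2
  refine le_weight_iff.2 ⟨by linarith, fun i => ⟨?_, ?_⟩⟩ <;> linarith [hw i, hl i, hu i]

theorem weight_mono (h : BoxLE l u l' u') : weight l u x ≤ weight l' u' x := by
  simpa using weight_add_le_weight (δ := 0) (by simpa using weight_nonpos)
    (fun i => by simpa using (h i).1) (fun i => by simpa using (h i).2)

end Weight

theorem width_sub_width :
    width l' u' - width l u = ∑ i, ((u' i - u i) + (l i - l' i)) := by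
  rw [width, width, ← sum_sub_distrib]
  exact sum_congr rfl fun i _ => by ring

theorem boxSet_eq_Icc : boxSet l u = Set.Icc l u := by
  ext x
  simp only [boxSet, Set.mem_ofPred_eq, Set.mem_Icc, Pi.le_def, forall_and]

theorem mem_interior_boxSet : x ∈ interior (boxSet l u) ↔ ∀ i, l i < x i ∧ x i < u i := by
  simp [boxSet_eq_Icc, ← Set.pi_univ_Icc, interior_pi_set Set.finite_univ]

theorem card_filter_notMem_interior {X : Type*} [TopologicalSpace X] {S : Set X}
    (hS : IsClosed S) (N : Finset X) :
    #(N.filter (· ∉ interior S)) = #(N.filter (· ∉ S)) + #(N.filter (· ∈ frontier S)) := by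
  rw [← card_union_of_disjoint (disjoint_filter.2 fun x _ h hx => h (hS.frontier_subset hx)),
    ← filter_or, hS.frontier_eq]
  congr! 2 with x
  have := @interior_subset _ _ S x
  simp only [Set.mem_sdiff]
  tauto

theorem OptSol.mul_sum_sub_le (hM : OptSol α l u N Ml Mu) (hb : IsBox l' u')
    (hV : BoxLE l u l' u') :
    α * ∑ x ∈ N, (weight l' u' x - weight Ml Mu x) ≤ (1 - α) * (width l' u' - width Ml Mu) := by
  have h := hM.2.2 l' u' hb hV
  rw [cost, cost] at h
  rw [sum_sub_distrib]
  linear_combination h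

theorem LargestOptSol.lt_one [Nonempty (Fin n)] (hM : LargestOptSol α l u N Ml Mu)
    (hα : α ≤ 1) : α < 1 := by
  refine hα.lt_of_ne fun h1 => ?_
  subst h1
  obtain ⟨⟨hb, hV, hopt⟩, hmax⟩ := hM
  have hbig : OptSol 1 l u N (fun i => Ml i - 1) (fun i => Mu i + 1) := by
    refine ⟨fun i => by linarith [hb i],
      fun i => ⟨by linarith [(hV i).1], by linarith [(hV i).2]⟩,
      fun L U hbL hVL => le_trans ?_ (hopt L U hbL hVL)⟩
    simp only [cost, sub_self, zero_mul, add_zero, neg_mul, one_mul, neg_le_neg_iff]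
    exact sum_le_sum fun x _ => weight_mono fun i => ⟨by linarith, by linarith⟩
  have i := Classical.arbitrary (Fin n)
  linarith [(hmax _ _ hbig i).1]

theorem OptSol.boxLE_of_forall_mem [Nonempty (Fin n)] {L U : Fin n → ℝ}
    (hM : OptSol α l u N Ml Mu) (hV : IsBox l u) (hα0 : 0 ≤ α) (hα1 : α < 1)
    (hVL : BoxLE l u L U) (hN : ∀ x ∈ N, x ∈ boxSet L U) : BoxLE Ml Mu L U := by
  set l' : Fin n → ℝ := fun i => max (Ml i) (L i)
  set u' : Fin n → ℝ := fun i => min (Mu i) (U i)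
  have hV' : BoxLE l u l' u' := fun i =>
    ⟨max_le (hM.2.1 i).1 (hVL i).1, le_min (hM.2.1 i).2 (hVL i).2⟩
  have hweight : ∀ x ∈ N, 0 ≤ weight l' u' x - weight Ml Mu x := fun x hx => by
    obtain ⟨h0, hw⟩ := le_weight_iff.1 (le_refl (weight Ml Mu x))
    refine sub_nonneg.2 (le_weight_iff.2 ⟨h0, fun i => ⟨?_, ?_⟩⟩)
    · exact le_sub_comm.1 (max_le (by linarith [hw i]) (by linarith [hN x hx i]))
    · exact le_sub_iff_add_le.2 (le_min (by linarith [hw i]) (by linarith [hN x hx i]))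
  have hwidth : 0 ≤ width l' u' - width Ml Mu := by
    refine (mul_nonneg_iff_of_pos_left (sub_pos.2 hα1)).1 ?_
    exact (mul_nonneg hα0 (sum_nonneg hweight)).trans
      (hM.mul_sum_sub_le (fun i => ((hV' i).1.trans (hV i)).trans (hV' i).2) hV')
  rw [width_sub_width] at hwidth
  have hterm : ∀ i, (u' i - Mu i) + (Ml i - l' i) ≤ 0 := fun i => by
    linarith [min_le_left (Mu i) (U i), le_max_left (Ml i) (L i)]
  have hzero := (sum_eq_zero_iff_of_nonpos fun i _ => hterm i).1
    (le_antisymm (sum_nonpos fun i _ => hterm i) hwidth)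
  intro i
  have := hzero i (mem_univ i)
  constructor <;> linarith [min_le_left (Mu i) (U i), le_max_left (Ml i) (L i),
    min_le_right (Mu i) (U i), le_max_right (Ml i) (L i)]

theorem exists_lt_forall_mem_boxSet {π : ℝ} (hπ : 0 < π) (hN : ∀ x ∈ N, x ∈ nbhd l u π) :
    ∃ ρ < π, 0 ≤ ρ ∧ ∀ x ∈ N, x ∈ boxSet (fun i => l i - ρ) (fun i => u i + ρ) := by
  have h : ∀ᶠ ρ in 𝓝 π, 0 ≤ ρ ∧ ∀ x ∈ N, ∀ i, l i - ρ ≤ x i ∧ x i ≤ u i + ρ := by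
    refine (le_mem_nhds hπ).and
      ((eventually_all_finset N).2 fun x hx => eventually_all.2 fun i => ?_)
    have hxi := hN x hx i
    exact ((le_mem_nhds (by linarith : l i - x i < π)).and
      (le_mem_nhds (by linarith : x i - u i < π))).mono fun ρ hρ => ⟨by linarith, by linarith⟩
  exact h.exists_lt

theorem OptSol.mul_card_notMem_le [Nonempty (Fin n)] (hM : OptSol α l u N Ml Mu)
    (hα0 : 0 ≤ α) : α * #(N.filter (· ∉ boxSet Ml Mu)) ≤ (1 - α) * (2 * n) := by
  obtain ⟨ε, hε, hεw⟩ : ∃ ε > 0, ∀ x ∈ N, x ∉ boxSet Ml Mu → ε ≤ -weight Ml Mu x := by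
    refine Eventually.exists_gt ((eventually_all_finset N).2 fun x _ => ?_)
    by_cases hx : x ∈ boxSet Ml Mu
    · exact .of_forall fun _ h => absurd hx h
    · have := weight_nonpos.lt_of_ne (mt weight_eq_zero_iff.1 hx)
      exact (ge_mem_nhds (neg_pos.2 this)).mono fun _ h _ => h
  have hweight : ∀ x ∈ N, ε * (if x ∉ boxSet Ml Mu then 1 else 0) ≤
      weight (fun i => Ml i - ε) (fun i => Mu i + ε) x - weight Ml Mu x := fun x hx => by
    split_ifs with h
    · linarith [weight_mono (x := x) (l := Ml) (u := Mu) (l' := fun i => Ml i - ε)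
        (u' := fun i => Mu i + ε) fun i => ⟨by linarith, by linarith⟩]
    · linarith [weight_add_le_weight (l' := fun i => Ml i - ε) (u' := fun i => Mu i + ε)
        (hεw x hx h) (fun i => by simp) (fun i => le_refl _)]
  have hopt := hM.mul_sum_sub_le (l' := fun i => Ml i - ε) (u' := fun i => Mu i + ε)
    (fun i => by linarith [hM.1 i])
    (fun i => ⟨by linarith [(hM.2.1 i).1], by linarith [(hM.2.1 i).2]⟩)
  rw [width_sub_width] at hopt
  have hsum := sum_le_sum hweight
  rw [← mul_sum, sum_boole] at hsum
  simp only [add_sub_cancel_left, sub_sub_cancel, sum_const, card_univ, Fintype.card_fin,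
    nsmul_eq_mul] at hopt
  nlinarith [mul_le_mul_of_nonneg_left hsum hα0]

theorem lower_lt_of_disjoint_facet (hV : IsBox l u) (hM : BoxLE l u Ml Mu) {i : Fin n}
    (hd : Disjoint (facet Ml Mu i false) (boxSet l u)) : Ml i < l i :=
  (hM i).1.lt_of_ne fun h => Set.disjoint_left.1 hd
    ⟨fun j => ⟨(hM j).1, (hV j).trans (hM j).2⟩, by simp [h]⟩ fun j => ⟨le_rfl, hV j⟩

theorem upper_lt_of_disjoint_facet (hV : IsBox l u) (hM : BoxLE l u Ml Mu) {i : Fin n}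
    (hd : Disjoint (facet Ml Mu i true) (boxSet l u)) : u i < Mu i :=
  (hM i).2.lt_of_ne' fun h => Set.disjoint_left.1 hd
    ⟨fun j => ⟨(hM j).1.trans (hV j), (hM j).2⟩, by simp [h]⟩ fun j => ⟨hV j, le_rfl⟩

theorem OptSol.mul_card_le_of_shrink [Nonempty (Fin n)] (hM : OptSol α l u N Ml Mu)
    (hV : IsBox l u) (hα0 : 0 ≤ α) {P : Finset (Fin n × Bool)} {ε : ℝ} (hε : 0 < ε)
    (hεP : ∀ i, ((i, false) ∈ P → ε ≤ l i - Ml i) ∧ ((i, true) ∈ P → ε ≤ Mu i - u i))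
    (hεN : ∀ x ∈ N, x ∈ interior (boxSet Ml Mu) → ∀ i, ε ≤ x i - Ml i ∧ ε ≤ Mu i - x i) :
    (1 - α) * #P ≤ α * #(N.filter (· ∉ interior (boxSet Ml Mu))) := by
  set d : Fin n × Bool → ℝ := fun ib => if ib ∈ P then ε else 0
  have hd : ∀ ib, 0 ≤ d ib ∧ d ib ≤ ε := fun ib => by
    simp only [d]; split_ifs <;> constructor <;> linarith
  set l' : Fin n → ℝ := fun i => Ml i + d (i, false)
  set u' : Fin n → ℝ := fun i => Mu i - d (i, true)
  have hV' : BoxLE l u l' u' := fun i => by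
    simp only [l', u', d]
    constructor <;> split_ifs with h
    · linarith [(hεP i).1 h]
    · linarith [(hM.2.1 i).1]
    · linarith [(hεP i).2 h]
    · linarith [(hM.2.1 i).2]
  have hweight : ∀ x ∈ N, -(ε * (if x ∉ interior (boxSet Ml Mu) then 1 else 0)) ≤
      weight l' u' x - weight Ml Mu x := fun x hx => by
    have hw := weight_nonpos (l := Ml) (u := Mu) (x := x)
    split_ifs with h
    · have hx' : x ∈ boxSet l' u' := fun i =>
        ⟨by linarith [(hεN x hx h i).1, (hd (i, false)).2],
          by linarith [(hεN x hx h i).2, (hd (i, true)).2]⟩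
      linarith [weight_eq_zero_iff.2 hx']
    · linarith [weight_add_le_weight (l' := l') (u' := u') (x := x) (δ := -ε) (by linarith)
        (fun i => by linarith [(hd (i, false)).2]) (fun i => by linarith [(hd (i, true)).2])]
  have hopt := hM.mul_sum_sub_le (fun i => ((hV' i).1.trans (hV i)).trans (hV' i).2) hV'
  have hdsum : ∑ i, ((u' i - Mu i) + (Ml i - l' i)) = -(ε * #P) := by
    have : ∑ ib, d ib = ε * #P := by
      rw [sum_ite_mem, univ_inter, sum_const, nsmul_eq_mul, mul_comm]
    rw [← this, Fintype.sum_prod_type, ← sum_neg_distrib]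
    exact sum_congr rfl fun i _ => by simp only [u', l', Fintype.sum_bool]; ring
  rw [width_sub_width, hdsum] at hopt
  have hsum := sum_le_sum hweight
  rw [sum_neg_distrib, ← mul_sum, sum_boole] at hsum
  nlinarith [mul_le_mul_of_nonneg_left hsum hα0]

theorem OptSol.mul_card_disjoint_facet_le [Nonempty (Fin n)] (hM : OptSol α l u N Ml Mu)
    (hV : IsBox l u) (hα0 : 0 ≤ α) :
    (1 - α) * #(univ.filter fun ib : Fin n × Bool =>
        Disjoint (facet Ml Mu ib.1 ib.2) (boxSet l u)) ≤
      α * #(N.filter (· ∉ interior (boxSet Ml Mu))) := by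
  set P := univ.filter fun ib : Fin n × Bool => Disjoint (facet Ml Mu ib.1 ib.2) (boxSet l u)
  have hev : ∀ᶠ ε in 𝓝 0, (∀ i, ((i, false) ∈ P → ε ≤ l i - Ml i) ∧
      ((i, true) ∈ P → ε ≤ Mu i - u i)) ∧
      ∀ x ∈ N, x ∈ interior (boxSet Ml Mu) → ∀ i, ε ≤ x i - Ml i ∧ ε ≤ Mu i - x i := by
    refine (eventually_all.2 fun i => ?_).and ((eventually_all_finset N).2 fun x _ => ?_)
    · refine (eventually_imp_distrib_left.2 fun h => ge_mem_nhds ?_).and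
        (eventually_imp_distrib_left.2 fun h => ge_mem_nhds ?_)
      · exact sub_pos.2 (lower_lt_of_disjoint_facet hV hM.2.1 (mem_filter.1 h).2)
      · exact sub_pos.2 (upper_lt_of_disjoint_facet hV hM.2.1 (mem_filter.1 h).2)
    · refine eventually_imp_distrib_left.2 fun h => eventually_all.2 fun i => ?_
      have := mem_interior_boxSet.1 h i
      exact (ge_mem_nhds (sub_pos.2 this.1)).and (ge_mem_nhds (sub_pos.2 this.2))
  obtain ⟨ε, hε, hεP, hεN⟩ := hev.exists_gt
  exact hM.mul_card_le_of_shrink hV hα0 hε hεP hεN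

end BoxFiltration

theorem point_count_bounds_largestOptSol_general
    (n : ℕ) (hn : 1 ≤ n) (X : Finset (Fin n → ℝ)) (π : ℝ) (hπ : 0 < π)
    (α : ℝ) (hα0 : 0 < α) (hα1 : α ≤ 1) (γ : ℝ) (hγ : γ = 1 / α - 1)
    (l u : Fin n → ℝ) (hV : IsBox l u)
    (Ml Mu : Fin n → ℝ) (hM : LargestOptSol α l u (nbhdPts X l u π) Ml Mu)
    (p q : ℕ)
    (hp : p = (Finset.univ.filter (fun ib : Fin n × Bool =>
        Disjoint (facet Ml Mu ib.1 ib.2) (boxSet l u))).card)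
    (hq : q = (Finset.univ.filter (fun ib : Fin n × Bool =>
        facet Ml Mu ib.1 ib.2 ⊆ nbhd l u π)).card)
    (hp1 : 1 ≤ p) (hq1 : 1 ≤ q)
    (θc θb : ℕ)
    (hθc : θc = ((nbhdPts X l u π).filter (fun x => x ∉ boxSet Ml Mu)).card)
    (hθb : θb = ((nbhdPts X l u π).filter
        (fun x => x ∈ frontier (boxSet Ml Mu))).card) :
    γ ≤ ((θc : ℝ) + θb) / p ∧ (θc : ℝ) / q ≤ γ := by
  have : Nonempty (Fin n) := ⟨⟨0, hn⟩⟩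
  have hα : α < 1 := hM.lt_one hα1
  obtain ⟨ρ, hρπ, hρ0, hρN⟩ :=
    exists_lt_forall_mem_boxSet hπ fun x hx => (Finset.mem_filter.1 hx).2
  have hMρ := hM.1.boxLE_of_forall_mem hV hα0.le hα
    (fun i => ⟨by linarith, by linarith⟩) hρN
  have hq2n : q = 2 * n := by
    rw [hq, Finset.filter_true_of_mem fun ib _ x hx i =>
      ⟨by linarith [(hx.1 i).1, (hMρ i).1], by linarith [(hx.1 i).2, (hMρ i).2]⟩]
    simp [mul_comm]
  have hexp := hM.1.mul_card_notMem_le hα0.le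
  have hshr := hM.1.mul_card_disjoint_facet_le hV hα0.le
  rw [card_filter_notMem_interior (boxSet_eq_Icc ▸ isClosed_Icc)] at hshr
  rw [← hθc] at hexp
  rw [← hp, ← hθc, ← hθb] at hshr
  have hγ' : γ = (1 - α) / α := by rw [hγ]; field_simp
  rw [hγ', div_le_div_iff₀ hα0 (by exact_mod_cast hp1),
    div_le_div_iff₀ (by exact_mod_cast hq1) hα0, hq2n]
  push_cast at hshr ⊢
  constructor <;> linarith

/-- point-count bounds for a largest optimal solution `M ≠ V` of
`sol_α(V, N)`, `N = X ∩ B(V, π)`: with `γ = 1/α - 1`, `p` the number of facets of `M`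
disjoint from `V`, and `q` the number of facets of `M` contained in the open box
`B(V, π)`, one has `(θ(N∖M) + θ(∂M))/p ≥ γ ≥ θ(N∖M)/q`. -/
theorem point_count_bounds_largestOptSol
    (n : ℕ) (hn : 1 ≤ n) (X : Finset (Fin n → ℝ)) (π : ℝ) (hπ : 0 < π)
    (α : ℝ) (hα0 : 0 < α) (hα1 : α ≤ 1) (γ : ℝ) (hγ : γ = 1 / α - 1)
    (l u : Fin n → ℝ) (hV : IsBox l u)
    (Ml Mu : Fin n → ℝ) (hM : LargestOptSol α l u (nbhdPts X l u π) Ml Mu)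
    (hMV : boxSet Ml Mu ≠ boxSet l u)
    (p q : ℕ)
    (hp : p = (Finset.univ.filter (fun ib : Fin n × Bool =>
        Disjoint (facet Ml Mu ib.1 ib.2) (boxSet l u))).card)
    (hq : q = (Finset.univ.filter (fun ib : Fin n × Bool =>
        facet Ml Mu ib.1 ib.2 ⊆ nbhd l u π)).card)
    (hp1 : 1 ≤ p) (hq1 : 1 ≤ q)
    (θc θb : ℕ)
    (hθc : θc = ((nbhdPts X l u π).filter (fun x => x ∉ boxSet Ml Mu)).card)
    (hθb : θb = ((nbhdPts X l u π).filter
        (fun x => x ∈ frontier (boxSet Ml Mu))).card) :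
    γ ≤ ((θc : ℝ) + θb) / p ∧ (θc : ℝ) / q ≤ γ :=
  point_count_bounds_largestOptSol_general n hn X π hπ α hα0 hα1 γ hγ l u hV Ml Mu hM p q hp hq hp1
    hq1 θc θb hθc hθb
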